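/- Let 1 ≤ q < p, let k ≤ n be positive integers, let ε > 0, and let x ∈ ℝ^n be a nonzero vector that is (k, ε)-ℓ_p-compressible. Then Δ_{q,p}(x) ≥ 1/((k/n)^{1/q − 1/p} + ε). -/

import Mathlib

open Finset

noncomputable def lpNorm {ι : Type*} [Fintype ι] (p : ℝ) (x : ι → ℝ) : ℝ :=
  (∑ i, |x i| ^ p) ^ (1 / p)

/-- `x` has at most `k` nonzero coordinates. -/
def Sparse {ι : Type*} (k : ℝ) (x : ι → ℝ) : Prop :=
  ((Function.support x).ncard : ℝ) ≤ k

/-- `x` is `(k, ε)`-`ℓ_p`-compressible. -/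
def Compressible {ι : Type*} [Fintype ι] (p k ε : ℝ) (x : ι → ℝ) : Prop :=
  ∃ y : ι → ℝ, Sparse k y ∧ lpNorm p (x - y) ≤ ε * lpNorm p x

/-- A subspace is `(k, ε)`-`ℓ_p`-spread if every nonzero vector in it is not
`(k, ε)`-`ℓ_p`-compressible. -/
def SpreadSubspace {ι : Type*} [Fintype ι] (p k ε : ℝ) (X : Submodule ℝ (ι → ℝ)) : Prop :=
  ∀ x ∈ X, x ≠ 0 → ¬ Compressible p k ε x

/-- The `(ℓ_q, ℓ_p)`-distortion of a vector. -/
noncomputable def distortion {ι : Type*} [Fintype ι] (q p : ℝ) (x : ι → ℝ) : ℝ :=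
  (Fintype.card ι : ℝ) ^ (1 / q - 1 / p) * lpNorm p x / lpNorm q x

/-- The `(ℓ_q, ℓ_p)`-distortion of a subspace. -/
noncomputable def distortionSub {ι : Type*} [Fintype ι] (q p : ℝ)
    (X : Submodule ℝ (ι → ℝ)) : ℝ :=
  sSup {d | ∃ x ∈ X, x ≠ 0 ∧ d = distortion q p x}

/-- A bipartite graph, presented as the neighbor sets of the left vertices,
is `t`-left-regular. -/
def LeftRegular {n m : ℕ} (N : Fin n → Finset (Fin m)) (t : ℕ) : Prop :=
  ∀ u, (N u).card = t

/-- The neighborhood `N(S)` of a set `S` of left vertices. -/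
def nbrs {n m : ℕ} (N : Fin n → Finset (Fin m)) (S : Finset (Fin n)) : Finset (Fin m) :=
  S.biUnion N

/-- The set `U(S)` of unique neighbors of a set `S` of left vertices. -/
def uniqueNbrs {n m : ℕ} (N : Fin n → Finset (Fin m)) (S : Finset (Fin n)) : Finset (Fin m) :=
  (nbrs N S).filter (fun r => (S.filter (fun v => r ∈ N v)).card = 1)

/-- The degree of a right vertex. -/
def rightDeg {n m : ℕ} (N : Fin n → Finset (Fin m)) (r : Fin m) : ℕ :=
  (Finset.univ.filter (fun u => r ∈ N u)).card

/-- `(γ, μ)`-vertex expansion. -/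
def VertexExpander {n m : ℕ} (N : Fin n → Finset (Fin m)) (t : ℕ) (γ μ : ℝ) : Prop :=
  ∀ S : Finset (Fin n), (S.card : ℝ) ≤ γ * n →
    (t : ℝ) * (1 - μ) * S.card ≤ ((nbrs N S).card : ℝ)

/-- `(γ, μ)`-unique expansion. -/
def UniqueExpander {n m : ℕ} (N : Fin n → Finset (Fin m)) (t : ℕ) (γ μ : ℝ) : Prop :=
  ∀ S : Finset (Fin n), (S.card : ℝ) ≤ γ * n →
    (t : ℝ) * (1 - μ) * S.card ≤ ((uniqueNbrs N S).card : ℝ)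

/-- The bipartite graph `G_A` of a matrix, presented by neighbor sets of left vertices
(columns): the neighbors of `u ∈ V_L` are the rows `r` with `A r u ≠ 0`. -/
noncomputable def matNbrs {m n : ℕ} (A : Matrix (Fin m) (Fin n) ℝ) : Fin n → Finset (Fin m) :=
  fun u => Finset.univ.filter (fun r => A r u ≠ 0)

/-- `A ∈ M_{m,n,s,t}`: entries in `{0, 1, -1}`, every row has exactly `s` nonzero entries,
and every column has exactly `t` nonzero entries. -/
def Biregular {m n : ℕ} (s t : ℕ) (A : Matrix (Fin m) (Fin n) ℝ) : Prop :=
  (∀ r u, A r u = 0 ∨ A r u = 1 ∨ A r u = -1) ∧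
  (∀ r : Fin m, (Finset.univ.filter (fun u => A r u ≠ 0)).card = s) ∧
  (∀ u : Fin n, (Finset.univ.filter (fun r => A r u ≠ 0)).card = t)

/-- The bipartite graph on `V_L ⊕ V_R` associated with left-neighbor data `N`. -/
def bipGraph {n m : ℕ} (N : Fin n → Finset (Fin m)) : SimpleGraph (Fin n ⊕ Fin m) where
  Adj x y :=
    match x, y with
    | Sum.inl u, Sum.inr r => r ∈ N u
    | Sum.inr r, Sum.inl u => r ∈ N u
    | _, _ => False
  symm := ⟨by rintro (u | r) (u' | r') h <;> first | exact h.elim | exact h⟩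
  loopless := ⟨by rintro (u | r) h <;> exact h.elim⟩

/-- The ball of radius `ℓ` about `v` in a graph. -/
def graphBall {V : Type*} (G : SimpleGraph V) (v : V) (ℓ : ℕ) : Set V :=
  {w | G.Reachable v w ∧ G.dist v w ≤ ℓ}

/-- The ball of radius `ℓ` about `v` contains no cycle. -/
def BallAcyclic {V : Type*} (G : SimpleGraph V) (v : V) (ℓ : ℕ) : Prop :=
  (SimpleGraph.induce (graphBall G v ℓ) G).IsAcyclic

/-- `𝒢_{m,n,s,t}`: the set of bipartite graphs on `V_L = Fin n`, `V_R = Fin m`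
(presented by neighbor sets of left vertices) in which every left vertex has degree
exactly `t` and every right vertex has degree exactly `s`. -/
def GSet (m n s t : ℕ) : Finset (Fin n → Finset (Fin m)) :=
  Finset.univ.filter (fun N => (∀ u, (N u).card = t) ∧ (∀ r, rightDeg N r = s))

/-- The edge set `F` is contained in the edge set of the graph given by `N`. -/
def edgesSubset {n m : ℕ} (F : Finset (Fin n × Fin m)) (N : Fin n → Finset (Fin m)) : Prop :=
  ∀ e ∈ F, e.2 ∈ N e.1

/-- The `ℓ₂ → ℓ₂` operator norm of a matrix. -/
noncomputable def l2OpNorm {m n : ℕ} (A : Matrix (Fin m) (Fin n) ℝ) : ℝ :=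
  sSup {c | ∃ x : Fin n → ℝ, x ≠ 0 ∧ c = lpNorm 2 (A.mulVec x) / lpNorm 2 x}

/-!
Let `y` be a `k`-sparse vector with `‖x - y‖_p ≤ ε ‖x‖_p` and split `x` along `S = supp y`.
The restriction `x|_S` is `k`-sparse, so Hölder gives `‖x|_S‖_q ≤ k^(1/q-1/p) ‖x‖_p`; off `S` the
vector `x` agrees with `x - y`, so `‖x|_Sᶜ‖_q ≤ n^(1/q-1/p) ‖x - y‖_p ≤ ε n^(1/q-1/p) ‖x‖_p`.
Minkowski adds the two bounds to `‖x‖_q ≤ n^(1/q-1/p) ((k/n)^(1/q-1/p) + ε) ‖x‖_p`.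
-/

theorem Lq_le_card_rpow_mul_Lp {ι : Type*} {p q : ℝ} (hq : 0 < q) (hqp : q ≤ p)
    (s : Finset ι) (f : ι → ℝ) :
    (∑ i ∈ s, |f i| ^ q) ^ (1 / q) ≤
      (#s : ℝ) ^ (1 / q - 1 / p) * (∑ i ∈ s, |f i| ^ p) ^ (1 / p) := by
  have hp : 0 < p := hq.trans_le hqp
  have hsum : ∀ r : ℝ, 0 ≤ ∑ i ∈ s, |f i| ^ r := fun r => sum_nonneg fun i _ => by positivity
  have hpow : ∀ i ∈ s, (|f i| ^ q) ^ (p / q) = |f i| ^ p := fun i _ => by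
    rw [← Real.rpow_mul (abs_nonneg _), mul_div_cancel₀ _ hq.ne']
  have power_mean := Real.rpow_sum_le_const_mul_sum_rpow_of_nonneg s
    ((one_le_div hq).mpr hqp) (fun i _ => by positivity : ∀ i ∈ s, 0 ≤ |f i| ^ q)
  rw [sum_congr rfl hpow] at power_mean
  calc (∑ i ∈ s, |f i| ^ q) ^ (1 / q) = ((∑ i ∈ s, |f i| ^ q) ^ (p / q)) ^ (1 / p) := by
        rw [← Real.rpow_mul (hsum q)]; field_simp
    _ ≤ ((#s : ℝ) ^ (p / q - 1) * ∑ i ∈ s, |f i| ^ p) ^ (1 / p) := by gcongr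
    _ = (#s : ℝ) ^ (1 / q - 1 / p) * (∑ i ∈ s, |f i| ^ p) ^ (1 / p) := by
        rw [Real.mul_rpow (by positivity) (hsum p), ← Real.rpow_mul (by positivity)]
        congr 2
        field_simp

section lpNorm

variable {ι : Type*} [Fintype ι] {p q : ℝ}

theorem lpNorm_nonneg (p : ℝ) (x : ι → ℝ) : 0 ≤ lpNorm p x :=
  Real.rpow_nonneg (sum_nonneg fun _ _ => by positivity) _

theorem lpNorm_pos {x : ι → ℝ} (hx : x ≠ 0) (p : ℝ) : 0 < lpNorm p x := by
  obtain ⟨i, hi⟩ := Function.ne_iff.mp hx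
  refine Real.rpow_pos_of_pos (sum_pos' (fun j _ => by positivity) ⟨i, mem_univ i, ?_⟩) _
  exact Real.rpow_pos_of_pos (abs_pos.mpr hi) p

theorem lpNorm_mono (hp : 0 ≤ p) {x y : ι → ℝ} (h : ∀ i, |x i| ≤ |y i|) :
    lpNorm p x ≤ lpNorm p y := by
  refine Real.rpow_le_rpow (sum_nonneg fun _ _ => by positivity) ?_ (by positivity)
  exact sum_le_sum fun i _ => Real.rpow_le_rpow (abs_nonneg _) (h i) hp

theorem lpNorm_add_le (hp : 1 ≤ p) (x y : ι → ℝ) :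
    lpNorm p (x + y) ≤ lpNorm p x + lpNorm p y :=
  Real.Lp_add_le univ x y hp

theorem sparse_fintype_card (x : ι → ℝ) : Sparse (Fintype.card ι) x := by
  unfold Sparse
  exact_mod_cast (Set.ncard_le_card _).trans_eq Nat.card_eq_fintype_card

theorem Sparse.lpNorm_le {k : ℝ} {x : ι → ℝ} (hx : Sparse k x) (hq : 0 < q) (hqp : q ≤ p) :
    lpNorm q x ≤ k ^ (1 / q - 1 / p) * lpNorm p x := by
  classical
  set s := univ.filter (fun i => x i ≠ 0)
  have hs : (#s : ℝ) ≤ k := by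
    have : Function.support x = s := by ext i; simp [s]
    rwa [Sparse, this, Set.ncard_coe_finset] at hx
  have hsum : ∀ r : ℝ, r ≠ 0 → ∑ i, |x i| ^ r = ∑ i ∈ s, |x i| ^ r := fun r hr =>
    (sum_filter_of_ne (p := fun i => x i ≠ 0) fun i _ h hi =>
      h (by simp [hi, Real.zero_rpow hr])).symm
  calc lpNorm q x ≤ (#s : ℝ) ^ (1 / q - 1 / p) * lpNorm p x := by
        rw [lpNorm, lpNorm, hsum q hq.ne', hsum p (hq.trans_le hqp).ne']
        exact Lq_le_card_rpow_mul_Lp hq hqp s x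
    _ ≤ k ^ (1 / q - 1 / p) * lpNorm p x := by
        have : 0 ≤ 1 / q - 1 / p := sub_nonneg.mpr (one_div_le_one_div_of_le hq hqp)
        gcongr
        exact lpNorm_nonneg p x

theorem Compressible.lpNorm_le {k ε : ℝ} {x : ι → ℝ} (hx : Compressible p k ε x)
    (hq : 1 ≤ q) (hqp : q ≤ p) :
    lpNorm q x ≤ (k ^ (1 / q - 1 / p) + ε * Fintype.card ι ^ (1 / q - 1 / p)) * lpNorm p x := by
  obtain ⟨y, hy, hxy⟩ := hx
  have hq0 : 0 < q := one_pos.trans_le hq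
  have hp0 : 0 ≤ p := hq0.le.trans hqp
  set s := Function.support y
  have head : lpNorm q (s.indicator x) ≤ k ^ (1 / q - 1 / p) * lpNorm p x := by
    have hsparse : Sparse k (s.indicator x) :=
      (Nat.cast_le.mpr (Set.ncard_le_ncard (Set.support_indicator_subset))).trans hy
    refine (hsparse.lpNorm_le hq0 hqp).trans ?_
    have hk : 0 ≤ k := (Nat.cast_nonneg _).trans hy
    gcongr
    exact lpNorm_mono hp0 fun i => by by_cases hi : i ∈ s <;> simp [hi]
  have tail :
      lpNorm q (sᶜ.indicator x) ≤ Fintype.card ι ^ (1 / q - 1 / p) * (ε * lpNorm p x) := by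
    refine ((sparse_fintype_card _).lpNorm_le hq0 hqp).trans ?_
    gcongr
    refine (lpNorm_mono hp0 fun i => ?_).trans hxy
    by_cases hi : i ∈ s <;> simp_all [s]
  calc lpNorm q x = lpNorm q (s.indicator x + sᶜ.indicator x) := by
        rw [Set.indicator_self_add_compl]
    _ ≤ lpNorm q (s.indicator x) + lpNorm q (sᶜ.indicator x) := lpNorm_add_le hq _ _
    _ ≤ _ := by linarith

end lpNorm

theorem compressible_distortion_lower_general {n : ℕ} (q p : ℝ) (hq : 1 ≤ q) (hqp : q < p)
    (k : ℕ) (ε : ℝ) (x : Fin n → ℝ) (hx : x ≠ 0) (hcomp : Compressible p k ε x) :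
    1 / (((k : ℝ) / n) ^ (1 / q - 1 / p) + ε) ≤ distortion q p x := by
  set α := 1 / q - 1 / p
  obtain ⟨i, -⟩ := Function.ne_iff.mp hx
  have hnα : 0 < (n : ℝ) ^ α := Real.rpow_pos_of_pos (Nat.cast_pos.mpr i.pos) α
  have hxp := lpNorm_pos hx p
  have hxq := lpNorm_pos hx q
  have key : lpNorm q x ≤ (n : ℝ) ^ α * (((k : ℝ) / n) ^ α + ε) * lpNorm p x := by
    have h := hcomp.lpNorm_le hq hqp.le
    rw [Fintype.card_fin] at h
    convert h using 2
    rw [Real.div_rpow (Nat.cast_nonneg k) (Nat.cast_nonneg n), mul_add,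
      mul_div_cancel₀ _ hnα.ne', mul_comm]
  have hD : 0 < ((k : ℝ) / n) ^ α + ε :=
    pos_of_mul_pos_right (pos_of_mul_pos_left (hxq.trans_le key) hxp.le) hnα.le
  rw [distortion, Fintype.card_fin, div_le_div_iff₀ hD hxq]
  linarith

/-- **Compressibility lower-bounds distortion.** If a nonzero `x ∈ ℝ^n` is
`(k, ε)`-`ℓ_p`-compressible with `1 ≤ q < p`, then
`Δ_{q,p}(x) ≥ 1/((k/n)^(1/q - 1/p) + ε)`. -/
theorem compressible_distortion_lower {n : ℕ} (q p : ℝ) (hq : 1 ≤ q) (hqp : q < p)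
    (k : ℕ) (hk : 0 < k) (hkn : k ≤ n) (ε : ℝ) (hε : 0 < ε)
    (x : Fin n → ℝ) (hx : x ≠ 0) (hcomp : Compressible p k ε x) :
    1 / (((k : ℝ) / n) ^ (1 / q - 1 / p) + ε) ≤ distortion q p x :=
  compressible_distortion_lower_general q p hq hqp k ε x hx hcomp
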